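/- Let P be the Petersen graph, let s and t be adjacent vertices of P, and let P' = P − {s,t}. The 2-colouring of V(P') that assigns colour 1 to the four vertices of degree 2 of P' and colour 2 to the remaining four vertices is balanced (each colour class has 4 vertices) and every monochromatic component has at most 2 vertices; in particular, the four degree-2 vertices of P' form an independent set, and every connected component of the subgraph of P' induced by the four degree-3 vertices has at most 2 vertices. -/

import Mathlib

/-!
Write `s = {a, b}` and `t = {c, d}` (disjoint, as `s` and `t` are adjacent) and let `e` be the
fifth element. A vertex of `P'` loses a neighbour exactly when it is adjacent to `s` or `t`, and
this happens exactly for the four vertices not contained in `s ∪ t`, i.e. those containing `e`.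
These pairwise meet in `e`, so they are independent. The other four vertices are the 2-subsets
of the 4-set `s ∪ t` other than `s` and `t`; the only one disjoint from such a `v` is
`(s ∪ t) \ v`, so they induce a perfect matching.
-/

/-- Vertices of the Petersen graph: 2-element subsets of {1,...,5} (modelled as `Fin 5`). -/
abbrev PetersenVert : Type := {p : Finset (Fin 5) // p.card = 2}

/-- The Petersen graph as the Kneser graph K(5,2): two 2-subsets are adjacent iff disjoint. -/
def Petersen : SimpleGraph PetersenVert where
  Adj a b := Disjoint a.1 b.1
  symm := ⟨fun _ _ h => Disjoint.symm h⟩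
  loopless := by
    constructor
    intro a h
    have ha : a.1 = ∅ := by simpa using disjoint_self.mp h
    have := a.2
    rw [ha] at this
    simp at this

/-- The vertex set of `P' = P − {s, t}`. -/
def avoidSet (s t : PetersenVert) : Set PetersenVert := {v | v ≠ s ∧ v ≠ t}

/-- `P' = P − {s, t}`: the subgraph of the Petersen graph induced on the vertices
different from `s` and `t`. -/
def Pminus (s t : PetersenVert) : SimpleGraph (avoidSet s t) :=
  Petersen.induce (avoidSet s t)

/-- `v` is one of the (four) vertices of degree 2 of `P' = P − {s, t}`. -/
def IsDeg2 (s t : PetersenVert) (v : avoidSet s t) : Prop :=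
  ((Pminus s t).neighborSet v).ncard = 2

open Classical in
/-- The 2-colouring of `V(P')` assigning colour 1 (here the value `0 : Fin 2`) to the four
degree-2 vertices and colour 2 (here the value `1 : Fin 2`) to the remaining vertices. -/
noncomputable def deg2Colouring (s t : PetersenVert) : avoidSet s t → Fin 2 :=
  fun v => if IsDeg2 s t v then 0 else 1

instance : DecidableRel Petersen.Adj := fun a b => inferInstanceAs (Decidable (Disjoint a.1 b.1))

open Finset

namespace SimpleGraph

variable {V : Type*} {G : SimpleGraph V}

lemma ncard_neighborSet_induce (S : Set V) (v : S) :
    ((G.induce S).neighborSet v).ncard = (G.neighborSet v ∩ S).ncard := by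
  rw [← Set.ncard_image_of_injective _ Subtype.val_injective]
  congr 1
  ext u
  constructor
  · rintro ⟨w, hw, rfl⟩
    exact ⟨hw, w.2⟩
  · rintro ⟨hu, huS⟩
    exact ⟨⟨u, huS⟩, hu, rfl⟩

lemma eq_or_adj_of_reachable (h : ∀ v, (G.neighborSet v).Subsingleton) {u v : V}
    (huv : G.Reachable u v) : u = v ∨ G.Adj v u := by
  obtain ⟨p⟩ := huv
  induction p with
  | nil => exact Or.inl rfl
  | cons hadj _ ih =>
    rcases ih with rfl | hvw
    · exact Or.inr hadj.symm
    · exact Or.inl (h _ hadj.symm hvw.symm)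

lemma ConnectedComponent.ncard_supp_le_two (h : ∀ v, (G.neighborSet v).Subsingleton)
    (K : G.ConnectedComponent) : K.supp.ncard ≤ 2 := by
  induction K using ConnectedComponent.ind with
  | h v =>
  have hsupp : (G.connectedComponentMk v).supp ⊆ insert v (G.neighborSet v) := fun u hu =>
    eq_or_adj_of_reachable h (ConnectedComponent.eq.mp hu)
  calc (G.connectedComponentMk v).supp.ncard
      ≤ (insert v (G.neighborSet v)).ncard := Set.ncard_le_ncard hsupp ((h v).finite.insert v)
    _ ≤ (G.neighborSet v).ncard + 1 := Set.ncard_insert_le _ _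
    _ ≤ 2 := by have := (Set.ncard_le_one (h v).finite).mpr fun a ha b hb => h v ha hb; omega

end SimpleGraph

namespace Finset

variable {α : Type*} [DecidableEq α]

lemma not_disjoint_of_not_subset_of_card_compl_le_one [Fintype α] {u a b : Finset α}
    (hu : uᶜ.card ≤ 1) (ha : ¬ a ⊆ u) (hb : ¬ b ⊆ u) : ¬ Disjoint a b := by
  obtain ⟨x, hxa, hxu⟩ := not_subset.mp ha
  obtain ⟨y, hyb, hyu⟩ := not_subset.mp hb
  have hxy : x = y := card_le_one.mp hu x (mem_compl.mpr hxu) y (mem_compl.mpr hyu)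
  exact not_disjoint_iff.mpr ⟨x, hxa, hxy ▸ hyb⟩

lemma eq_sdiff_of_disjoint_of_card_le {u v a : Finset α} (hv : v ⊆ u) (ha : a ⊆ u)
    (hva : Disjoint v a) (hcard : u.card ≤ v.card + a.card) : a = u \ v := by
  refine eq_of_subset_of_card_le (subset_sdiff.mpr ⟨ha, hva.symm⟩) ?_
  rw [card_sdiff_of_subset hv]
  omega

end Finset

set_option synthInstance.maxSize 2000 in
theorem petersen_card_neighbors_off_edge_eq_two_iff : ∀ s t v : PetersenVert,
    Petersen.Adj s t → v ≠ s → v ≠ t →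
    ((univ.filter fun u => Petersen.Adj v u ∧ u ≠ s ∧ u ≠ t).card = 2 ↔ ¬ v.1 ⊆ s.1 ∪ t.1) := by
  decide

set_option synthInstance.maxSize 2000 in
theorem petersen_card_off_edge_subset_union : ∀ s t : PetersenVert, Petersen.Adj s t →
    (univ.filter fun v : PetersenVert => v ≠ s ∧ v ≠ t ∧ v.1 ⊆ s.1 ∪ t.1).card = 4 ∧
    (univ.filter fun v : PetersenVert => v ≠ s ∧ v ≠ t ∧ ¬ v.1 ⊆ s.1 ∪ t.1).card = 4 := by
  decide

lemma ncard_avoidSet_setOf (s t : PetersenVert) (p : PetersenVert → Prop) [DecidablePred p] :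
    {v : avoidSet s t | p v}.ncard = (univ.filter fun v => v ≠ s ∧ v ≠ t ∧ p v).card := by
  rw [show {v : avoidSet s t | p v} = {v : avoidSet s t | (v : PetersenVert) ∈ {u | p u}} from rfl,
    Set.ncard_subtype, ← Set.ncard_coe_finset]
  congr 1
  ext v
  simp [avoidSet, and_comm, and_left_comm]

section PetersenMinusEdge

variable {s t : PetersenVert}

lemma card_union_of_petersen_adj (hst : Petersen.Adj s t) : (s.1 ∪ t.1).card = 4 := by
  rw [card_union_of_disjoint hst, s.2, t.2]

lemma isDeg2_iff_not_subset_union (hst : Petersen.Adj s t) (v : avoidSet s t) :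
    IsDeg2 s t v ↔ ¬ v.1.1 ⊆ s.1 ∪ t.1 := by
  have hnbrs : Petersen.neighborSet v ∩ avoidSet s t =
      ↑(univ.filter fun u => Petersen.Adj v u ∧ u ≠ s ∧ u ≠ t) := by
    ext
    simp [avoidSet]
  rw [IsDeg2, Pminus, SimpleGraph.ncard_neighborSet_induce, hnbrs, Set.ncard_coe_finset]
  exact petersen_card_neighbors_off_edge_eq_two_iff s t v hst v.2.1 v.2.2

lemma deg2Colouring_eq_zero_iff (v : avoidSet s t) : deg2Colouring s t v = 0 ↔ IsDeg2 s t v := by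
  by_cases h : IsDeg2 s t v <;> simp [deg2Colouring, h]

lemma deg2Colouring_eq_one_iff (v : avoidSet s t) : deg2Colouring s t v = 1 ↔ ¬ IsDeg2 s t v := by
  by_cases h : IsDeg2 s t v <;> simp [deg2Colouring, h]

lemma ncard_deg2Colouring_eq_zero (hst : Petersen.Adj s t) :
    {v : avoidSet s t | deg2Colouring s t v = 0}.ncard = 4 := by
  simp only [deg2Colouring_eq_zero_iff, isDeg2_iff_not_subset_union hst]
  rw [ncard_avoidSet_setOf s t fun v => ¬ v.1 ⊆ s.1 ∪ t.1]
  exact (petersen_card_off_edge_subset_union s t hst).2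

lemma ncard_deg2Colouring_eq_one (hst : Petersen.Adj s t) :
    {v : avoidSet s t | deg2Colouring s t v = 1}.ncard = 4 := by
  simp only [deg2Colouring_eq_one_iff, isDeg2_iff_not_subset_union hst, not_not]
  rw [ncard_avoidSet_setOf s t fun v => v.1 ⊆ s.1 ∪ t.1]
  exact (petersen_card_off_edge_subset_union s t hst).1

lemma not_adj_of_isDeg2 (hst : Petersen.Adj s t) {a b : avoidSet s t} (ha : IsDeg2 s t a)
    (hb : IsDeg2 s t b) : ¬ (Pminus s t).Adj a b := by
  rw [isDeg2_iff_not_subset_union hst] at ha hb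
  have hcompl : (s.1 ∪ t.1)ᶜ.card ≤ 1 := by
    rw [card_compl, card_union_of_petersen_adj hst, Fintype.card_fin]
  exact not_disjoint_of_not_subset_of_card_compl_le_one hcompl ha hb

lemma eq_of_adj_of_not_isDeg2 (hst : Petersen.Adj s t) {v a b : avoidSet s t}
    (hv : ¬ IsDeg2 s t v) (ha : ¬ IsDeg2 s t a) (hb : ¬ IsDeg2 s t b)
    (hva : (Pminus s t).Adj v a) (hvb : (Pminus s t).Adj v b) : a = b := by
  rw [isDeg2_iff_not_subset_union hst, not_not] at hv ha hb
  have hcard : ∀ w : avoidSet s t, (s.1 ∪ t.1).card ≤ v.1.1.card + w.1.1.card := by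
    intro w
    rw [card_union_of_petersen_adj hst, v.1.2, w.1.2]
  have hab : a.1.1 = b.1.1 :=
    (eq_sdiff_of_disjoint_of_card_le hv ha hva (hcard a)).trans
      (eq_sdiff_of_disjoint_of_card_le hv hb hvb (hcard b)).symm
  exact Subtype.ext (Subtype.ext hab)

lemma ncard_supp_le_two_of_isDeg2 (hst : Petersen.Adj s t) {S : Set (avoidSet s t)}
    (hS : ∀ v ∈ S, IsDeg2 s t v) (K : ((Pminus s t).induce S).ConnectedComponent) :
    K.supp.ncard ≤ 2 :=
  (K.ncard_supp_le_two (G := (Pminus s t).induce S) fun v a ha =>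
    (not_adj_of_isDeg2 hst (hS _ v.2) (hS _ a.2) ha).elim)

lemma ncard_supp_le_two_of_not_isDeg2 (hst : Petersen.Adj s t) {S : Set (avoidSet s t)}
    (hS : ∀ v ∈ S, ¬ IsDeg2 s t v) (K : ((Pminus s t).induce S).ConnectedComponent) :
    K.supp.ncard ≤ 2 :=
  (K.ncard_supp_le_two (G := (Pminus s t).induce S) fun v a ha b hb =>
    Subtype.ext (eq_of_adj_of_not_isDeg2 hst (hS _ v.2) (hS _ a.2) (hS _ b.2) ha hb))

end PetersenMinusEdge

/-- For adjacent vertices `s, t` of the Petersen graph and `P' = P − {s,t}`, the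
2-colouring giving colour 1 to the four degree-2 vertices and colour 2 to the rest is
balanced (each colour class has 4 vertices) and every monochromatic component has at most
2 vertices; in particular, the four degree-2 vertices form an independent set, and every
connected component of the subgraph induced by the four degree-3 vertices (the remaining
vertices) has at most 2 vertices. -/
theorem all_one_balanced_colouring (s t : PetersenVert) (hst : Petersen.Adj s t) :
    {v : avoidSet s t | deg2Colouring s t v = 0}.ncard = 4 ∧
    {v : avoidSet s t | deg2Colouring s t v = 1}.ncard = 4 ∧
    (∀ i : Fin 2,
      ∀ K : ((Pminus s t).induce {v | deg2Colouring s t v = i}).ConnectedComponent,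
        K.supp.ncard ≤ 2) ∧
    (∀ a b : avoidSet s t, IsDeg2 s t a → IsDeg2 s t b → ¬ (Pminus s t).Adj a b) ∧
    (∀ K : ((Pminus s t).induce {v | ¬ IsDeg2 s t v}).ConnectedComponent,
        K.supp.ncard ≤ 2) := by
  refine ⟨ncard_deg2Colouring_eq_zero hst, ncard_deg2Colouring_eq_one hst, ?_,
    fun _ _ => not_adj_of_isDeg2 hst, ncard_supp_le_two_of_not_isDeg2 hst fun _ => id⟩
  intro i
  fin_cases i
  · exact ncard_supp_le_two_of_isDeg2 hst fun v => (deg2Colouring_eq_zero_iff v).mp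
  · exact ncard_supp_le_two_of_not_isDeg2 hst fun v => (deg2Colouring_eq_one_iff v).mp
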